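/- arXiv:2110.12020 — 6 statements merged into one kernel-verified Lean document; each statement's English description precedes it below -/
import Mathlib

section
/- Let V be a finite ground set and f a function from subsets of V to the nonnegative reals that is monotone (S ⊆ T implies f(S) ≤ f(T)), submodular (for all S ⊆ T ⊆ V and x ∈ V \ T, f(S ∪ {x}) − f(S) ≥ f(T ∪ {x}) − f(T)), and satisfies f(∅) = 0. Let G_0 = ∅ and for each i, G_i = G_{i−1} ∪ {x_i} where x_i ∈ V maximizes the marginal gain f(G_{i−1} ∪ {x}) − f(G_{i−1}) over x ∈ V. Then for every subset OPT ⊆ V with |OPT| ≤ k, one has f(G_k) ≥ (1 − 1/e)·f(OPT). -/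
/-!
Summing the marginal gains over `OPT` and using submodularity, `f OPT ≤ f (G i) + k · gain i`,
where `gain i = f (G (i + 1)) - f (G i)` is the greedy gain, maximal among single insertions.
Hence the gap `f OPT - f (G i)` shrinks by a factor `1 - 1/k` at every step, and after `k` steps
it is at most `(1 - 1/k)^k ≤ 1/e` times its initial value `f OPT`.
-/

open Finset Real

lemma le_exp_neg_one_mul_of_le_mul_sub {d : ℕ → ℝ} {k : ℕ} (hd₀ : 0 ≤ d 0)
    (hd : ∀ i, d i ≤ k * (d i - d (i + 1))) : d k ≤ exp (-1) * d 0 := by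
  rcases Nat.eq_zero_or_pos k with rfl | hk
  · have : d 0 ≤ 0 := by simpa using hd 0
    nlinarith [exp_pos (-1)]
  have hk' : (1 : ℝ) ≤ k := by exact_mod_cast hk
  have hcontract : ∀ i, d i ≤ (1 - 1 / k) ^ i * d 0 := by
    intro i
    induction i with
    | zero => simp
    | succ i ih =>
      have hstep : d (i + 1) ≤ (1 - 1 / k) * d i := by
        have := hd i
        rw [one_sub_mul, ← sub_nonneg]
        field_simp
        linarith
      have hfactor : 0 ≤ 1 - 1 / (k : ℝ) := by
        rw [sub_nonneg, div_le_one (by linarith)]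
        exact hk'
      calc d (i + 1) ≤ (1 - 1 / k) * d i := hstep
        _ ≤ (1 - 1 / k) * ((1 - 1 / k) ^ i * d 0) := mul_le_mul_of_nonneg_left ih hfactor
        _ = (1 - 1 / k) ^ (i + 1) * d 0 := by ring
  calc d k ≤ (1 - 1 / k) ^ k * d 0 := hcontract k
    _ ≤ exp (-1) * d 0 := mul_le_mul_of_nonneg_right (one_sub_div_pow_le_exp_neg hk') hd₀

section Submodular

variable {α : Type*} [DecidableEq α] {V : Finset α} {f : Finset α → ℝ}

lemma le_add_sum_marginal_of_submodular
    (hsubmod : ∀ S T : Finset α, S ⊆ T → T ⊆ V → ∀ x ∈ V, x ∉ T →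
      f (insert x T) - f T ≤ f (insert x S) - f S)
    {S : Finset α} (hS : S ⊆ V) {T : Finset α} (hT : T ⊆ V) :
    f (S ∪ T) ≤ f S + ∑ x ∈ T, (f (insert x S) - f S) := by
  induction T using Finset.induction_on with
  | empty => simp
  | @insert a T haT ih =>
    have haV : a ∈ V := hT (mem_insert_self a T)
    have hTV : T ⊆ V := (subset_insert a T).trans hT
    have hgain : f (S ∪ insert a T) - f (S ∪ T) ≤ f (insert a S) - f S := by
      rw [union_insert]
      by_cases haS : a ∈ S
      · simp [haS]
      · exact hsubmod S (S ∪ T) subset_union_left (union_subset hS hTV) a haV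
          (by simp [haS, haT])
    rw [sum_insert haT]
    linarith [ih hTV]

def IsGreedyStep (V : Finset α) (f : Finset α → ℝ) (A B : Finset α) : Prop :=
  ∃ x ∈ V, B = insert x A ∧ ∀ y ∈ V, f (insert y A) - f A ≤ f (insert x A) - f A

lemma IsGreedyStep.subset {A B : Finset α} (h : IsGreedyStep V f A B) (hA : A ⊆ V) : B ⊆ V := by
  obtain ⟨x, hxV, rfl, -⟩ := h
  exact insert_subset hxV hA

lemma IsGreedyStep.sub_le_mul_gain
    (hmono : ∀ S T : Finset α, S ⊆ T → T ⊆ V → f S ≤ f T)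
    (hsubmod : ∀ S T : Finset α, S ⊆ T → T ⊆ V → ∀ x ∈ V, x ∉ T →
      f (insert x T) - f T ≤ f (insert x S) - f S)
    {A B : Finset α} (h : IsGreedyStep V f A B) (hA : A ⊆ V)
    {OPT : Finset α} (hOPT : OPT ⊆ V) {k : ℕ} (hcard : #OPT ≤ k) :
    f OPT - f A ≤ k * (f B - f A) := by
  have hB := h.subset hA
  obtain ⟨x, -, rfl, hmax⟩ := h
  have hgain_nonneg : 0 ≤ f (insert x A) - f A := sub_nonneg.2 (hmono _ _ (subset_insert x A) hB)
  have hsum : ∑ y ∈ OPT, (f (insert y A) - f A) ≤ #OPT * (f (insert x A) - f A) := by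
    calc ∑ y ∈ OPT, (f (insert y A) - f A) ≤ ∑ _y ∈ OPT, (f (insert x A) - f A) :=
          sum_le_sum fun y hy => hmax y (hOPT hy)
      _ = #OPT * (f (insert x A) - f A) := by rw [sum_const, nsmul_eq_mul]
  have hcard' : (#OPT : ℝ) * (f (insert x A) - f A) ≤ k * (f (insert x A) - f A) :=
    mul_le_mul_of_nonneg_right (by exact_mod_cast hcard) hgain_nonneg
  linarith [hmono OPT (A ∪ OPT) subset_union_right (union_subset hA hOPT),
    le_add_sum_marginal_of_submodular hsubmod hA hOPT]

end Submodular

theorem greedy_one_sub_inv_e_approx_general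
    {α : Type*} [DecidableEq α] (V : Finset α) (f : Finset α → ℝ)
    (hmono : ∀ S T : Finset α, S ⊆ T → T ⊆ V → f S ≤ f T)
    (hsubmod : ∀ S T : Finset α, S ⊆ T → T ⊆ V → ∀ x ∈ V, x ∉ T →
      f (insert x T) - f T ≤ f (insert x S) - f S)
    (hempty : f ∅ = 0)
    (G : ℕ → Finset α)
    (hG0 : G 0 = ∅)
    (hGstep : ∀ i : ℕ, ∃ x ∈ V, G (i + 1) = insert x (G i) ∧
      ∀ y ∈ V, f (insert y (G i)) - f (G i) ≤ f (insert x (G i)) - f (G i))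
    (k : ℕ) (OPT : Finset α) (hOPT : OPT ⊆ V) (hcard : OPT.card ≤ k) :
    (1 - 1 / Real.exp 1) * f OPT ≤ f (G k) := by
  have hGV : ∀ i, G i ⊆ V := by
    intro i
    induction i with
    | zero => simp [hG0]
    | succ i ih => exact IsGreedyStep.subset (hGstep i) ih
  have hgap := le_exp_neg_one_mul_of_le_mul_sub (d := fun i => f OPT - f (G i)) (k := k)
    (by simpa [hG0] using hmono ∅ OPT (empty_subset _) hOPT)
    (fun i => by
      simpa using IsGreedyStep.sub_le_mul_gain hmono hsubmod (hGstep i) (hGV i) hOPT hcard)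
  simp only [hG0, hempty, sub_zero] at hgap
  rw [exp_neg, inv_eq_one_div] at hgap
  linarith

/-- **Greedy submodular maximization guarantee (Nemhauser et al.).**
Let `V` be a finite ground set and `f` a monotone, submodular, nonnegative function on
subsets of `V` with `f ∅ = 0`.  If `G` is a greedy sequence (starting from `∅`, each step
inserting an element of `V` of maximal marginal gain), then for every `OPT ⊆ V` with
`|OPT| ≤ k` we have `f (G k) ≥ (1 - 1/e)·f OPT`. -/
theorem greedy_one_sub_inv_e_approx
    {α : Type*} [DecidableEq α] (V : Finset α) (f : Finset α → ℝ)
    (hnonneg : ∀ S : Finset α, S ⊆ V → 0 ≤ f S)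
    (hmono : ∀ S T : Finset α, S ⊆ T → T ⊆ V → f S ≤ f T)
    (hsubmod : ∀ S T : Finset α, S ⊆ T → T ⊆ V → ∀ x ∈ V, x ∉ T →
      f (insert x T) - f T ≤ f (insert x S) - f S)
    (hempty : f ∅ = 0)
    (G : ℕ → Finset α)
    (hG0 : G 0 = ∅)
    (hGstep : ∀ i : ℕ, ∃ x ∈ V, G (i + 1) = insert x (G i) ∧
      ∀ y ∈ V, f (insert y (G i)) - f (G i) ≤ f (insert x (G i)) - f (G i))
    (k : ℕ) (OPT : Finset α) (hOPT : OPT ⊆ V) (hcard : OPT.card ≤ k) :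
    (1 - 1 / Real.exp 1) * f OPT ≤ f (G k) :=
  greedy_one_sub_inv_e_approx_general V f hmono hsubmod hempty G hG0 hGstep k OPT hOPT hcard
end

section
/- Let V be a finite ground set and f a monotone submodular function on subsets of V with f(∅) = 0 and nonnegative values. Let (G_i) be a greedy sequence for f (G_0 = ∅ and G_{i+1} = G_i ∪ {x} with x ∈ V maximizing the marginal gain). Then for every subset OPT ⊆ V with |OPT| ≤ k and every i, f(OPT) − f(G_{i+1}) ≤ (1 − 1/k)·(f(OPT) − f(G_i)). -/
/-!
Let `D = f OPT - f (G i)` be the current gap and `g` the greedy gain at step `i`. By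
monotonicity and submodularity, `D ≤ f (G i ∪ OPT) - f (G i)` is at most the sum of the
marginal gains of the elements of `OPT` at `G i`, each of which is at most `g`; hence
`D ≤ k * g`, i.e. `D / k ≤ g`, and the new gap is `D - g ≤ (1 - 1/k) * D`.
-/

section Submodular

variable {α : Type*} [DecidableEq α] {V : Finset α} {f : Finset α → ℝ}

theorem sub_le_sum_marginal_gain
    (hsubmod : ∀ S T : Finset α, S ⊆ T → T ⊆ V → ∀ x ∈ V, x ∉ T →
      f (insert x T) - f T ≤ f (insert x S) - f S)
    {S : Finset α} (hS : S ⊆ V) :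
    ∀ T : Finset α, T ⊆ V → f (S ∪ T) - f S ≤ ∑ x ∈ T, (f (insert x S) - f S) := by
  intro T
  induction T using Finset.induction_on with
  | empty => simp
  | @insert a T haT ih =>
    intro hT
    obtain ⟨haV, hTV⟩ := Finset.insert_subset_iff.mp hT
    rw [Finset.sum_insert haT, Finset.union_insert]
    by_cases haS : a ∈ S
    · rw [Finset.insert_eq_of_mem (Finset.mem_union_left T haS), Finset.insert_eq_of_mem haS]
      linarith [ih hTV]
    · have haST : a ∉ S ∪ T := by simp [haS, haT]
      linarith [ih hTV,
        hsubmod S (S ∪ T) Finset.subset_union_left (Finset.union_subset hS hTV) a haV haST]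

theorem sub_le_card_mul_of_marginal_gain_le
    (hmono : ∀ S T : Finset α, S ⊆ T → T ⊆ V → f S ≤ f T)
    (hsubmod : ∀ S T : Finset α, S ⊆ T → T ⊆ V → ∀ x ∈ V, x ∉ T →
      f (insert x T) - f T ≤ f (insert x S) - f S)
    {S T : Finset α} (hS : S ⊆ V) (hT : T ⊆ V) {g : ℝ}
    (hgain : ∀ y ∈ T, f (insert y S) - f S ≤ g) :
    f T - f S ≤ T.card * g :=
  calc f T - f S
      ≤ f (S ∪ T) - f S := by
        gcongr; exact hmono T (S ∪ T) Finset.subset_union_right (Finset.union_subset hS hT)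
    _ ≤ ∑ y ∈ T, (f (insert y S) - f S) := sub_le_sum_marginal_gain hsubmod hS T hT
    _ ≤ T.card • g := Finset.sum_le_card_nsmul T _ g hgain
    _ = T.card * g := nsmul_eq_mul _ _

theorem greedy_subset {G : ℕ → Finset α} (hG0 : G 0 = ∅)
    (hGstep : ∀ i : ℕ, ∃ x ∈ V, G (i + 1) = insert x (G i) ∧
      ∀ y ∈ V, f (insert y (G i)) - f (G i) ≤ f (insert x (G i)) - f (G i)) :
    ∀ i, G i ⊆ V
  | 0 => hG0 ▸ Finset.empty_subset V
  | i + 1 => by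
    obtain ⟨x, hxV, hGsucc, -⟩ := hGstep i
    exact hGsucc ▸ Finset.insert_subset hxV (greedy_subset hG0 hGstep i)

end Submodular

theorem greedy_contraction_step_general
    {α : Type*} [DecidableEq α] (V : Finset α) (f : Finset α → ℝ)
    (hmono : ∀ S T : Finset α, S ⊆ T → T ⊆ V → f S ≤ f T)
    (hsubmod : ∀ S T : Finset α, S ⊆ T → T ⊆ V → ∀ x ∈ V, x ∉ T →
      f (insert x T) - f T ≤ f (insert x S) - f S)
    (G : ℕ → Finset α)
    (hG0 : G 0 = ∅)
    (hGstep : ∀ i : ℕ, ∃ x ∈ V, G (i + 1) = insert x (G i) ∧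
      ∀ y ∈ V, f (insert y (G i)) - f (G i) ≤ f (insert x (G i)) - f (G i))
    (k : ℕ) (OPT : Finset α) (hOPT : OPT ⊆ V) (hcard : OPT.card ≤ k) :
    ∀ i : ℕ, f OPT - f (G (i + 1)) ≤ (1 - 1 / (k : ℝ)) * (f OPT - f (G i)) := by
  intro i
  have hGi : G i ⊆ V := greedy_subset hG0 hGstep i
  obtain ⟨x, hxV, hGsucc, hgreedy⟩ := hGstep i
  set gain := f (insert x (G i)) - f (G i)
  have hgain_nonneg : 0 ≤ gain :=
    sub_nonneg.mpr (hmono _ _ (Finset.subset_insert x _) (Finset.insert_subset hxV hGi))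
  have hgap : f OPT - f (G i) ≤ k * gain :=
    calc f OPT - f (G i)
        ≤ OPT.card * gain := sub_le_card_mul_of_marginal_gain_le hmono hsubmod hGi hOPT
          fun y hy => hgreedy y (hOPT hy)
      _ ≤ k * gain := by gcongr
  -- Also fine for `k = 0`: then `1 / k = 0` and the claim is just monotonicity.
  have hgap_div : (f OPT - f (G i)) / k ≤ gain :=
    div_le_of_le_mul₀ k.cast_nonneg hgain_nonneg (by linarith)
  have hcontract : (1 - 1 / (k : ℝ)) * (f OPT - f (G i)) =
      f OPT - f (G i) - (f OPT - f (G i)) / k := by ring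
  rw [hGsucc, hcontract]
  linarith

/-- **One-step contraction for greedy submodular maximization.**
For a monotone, submodular, nonnegative `f` with `f ∅ = 0` and a greedy sequence `G`,
for every `OPT ⊆ V` with `|OPT| ≤ k` and every `i`,
`f OPT - f (G (i+1)) ≤ (1 - 1/k)·(f OPT - f (G i))`. -/
theorem greedy_contraction_step
    {α : Type*} [DecidableEq α] (V : Finset α) (f : Finset α → ℝ)
    (hnonneg : ∀ S : Finset α, S ⊆ V → 0 ≤ f S)
    (hmono : ∀ S T : Finset α, S ⊆ T → T ⊆ V → f S ≤ f T)
    (hsubmod : ∀ S T : Finset α, S ⊆ T → T ⊆ V → ∀ x ∈ V, x ∉ T →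
      f (insert x T) - f T ≤ f (insert x S) - f S)
    (hempty : f ∅ = 0)
    (G : ℕ → Finset α)
    (hG0 : G 0 = ∅)
    (hGstep : ∀ i : ℕ, ∃ x ∈ V, G (i + 1) = insert x (G i) ∧
      ∀ y ∈ V, f (insert y (G i)) - f (G i) ≤ f (insert x (G i)) - f (G i))
    (k : ℕ) (OPT : Finset α) (hOPT : OPT ⊆ V) (hcard : OPT.card ≤ k) :
    ∀ i : ℕ, f OPT - f (G (i + 1)) ≤ (1 - 1 / (k : ℝ)) * (f OPT - f (G i)) :=
  greedy_contraction_step_general V f hmono hsubmod G hG0 hGstep k OPT hOPT hcard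
end

section
/- Let Y be a finite set of points in a metric space, μ̂ any point, Ω(S, Y) = Σ_{x∈Y} min_{m∈S} d(x, m) for nonempty finite S, and Θ(μ, Y) = Ω({μ̂}, Y) − Ω({μ̂} ∪ μ, Y). Then Θ(·, Y) is submodular: for all finite sets S ⊆ T and every point x ∉ T, Θ(T ∪ {x}, Y) − Θ(T, Y) ≤ Θ(S ∪ {x}, Y) − Θ(S, Y). -/
open Finset

/-- The clustering cost `Ω(S, Y) = Σ_{x ∈ Y} min_{m ∈ S} d(x, m)` for a nonempty
finite center set `S`. -/
noncomputable def omegaCost {α : Type*} [MetricSpace α]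
    (Y : Finset α) (S : Finset α) (hS : S.Nonempty) : ℝ :=
  ∑ x ∈ Y, S.inf' hS (fun m => dist x m)

/-- The modified clustering objective
`Θ(μ, Y) = Ω({μ̂}, Y) - Ω({μ̂} ∪ μ, Y)` for a fixed phantom center `μ̂`. -/
noncomputable def theta {α : Type*} [MetricSpace α] [DecidableEq α]
    (muhat : α) (Y : Finset α) (μ : Finset α) : ℝ :=
  omegaCost Y {muhat} (singleton_nonempty muhat) -
    omegaCost Y (insert muhat μ) (insert_nonempty muhat μ)

/-! Adding a center `x` lowers the distance from a point `y` to its nearest center from `d`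
to `min d (dist y x)`, a decrease of `(d - dist y x)⁺`. Enlarging the center set only lowers `d`,
so this decrease is antitone in the center set; summing over `Y` gives the diminishing returns
of `Θ`, the phantom center `μ̂` merely keeping every center set nonempty. -/

theorem sub_min_le_sub_min {β : Type*} [AddCommGroup β] [LinearOrder β] [IsOrderedAddMonoid β]
    (c : β) {a b : β} (hab : a ≤ b) : a - min c a ≤ b - min c b := by
  rcases le_total c a with h | h
  · rw [min_eq_left h, min_eq_left (h.trans hab)]
    exact sub_le_sub_right hab c
  · rw [min_eq_right h, sub_self, sub_nonneg]
    exact min_le_right c b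

theorem Finset.inf'_sub_inf'_insert_le_of_subset {α β : Type*} [DecidableEq α]
    [AddCommGroup β] [LinearOrder β] [IsOrderedAddMonoid β] {S T : Finset α}
    (hS : S.Nonempty) (hST : S ⊆ T) (f : α → β) (x : α) :
    T.inf' (hS.mono hST) f - (insert x T).inf' (insert_nonempty x T) f ≤
      S.inf' hS f - (insert x S).inf' (insert_nonempty x S) f := by
  rw [inf'_insert (hS.mono hST), inf'_insert hS]
  exact sub_min_le_sub_min (f x) (inf'_mono f hST hS)

theorem theta_sub_theta {α : Type*} [MetricSpace α] [DecidableEq α]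
    (muhat : α) (Y A B : Finset α) :
    theta muhat Y A - theta muhat Y B =
      ∑ y ∈ Y, ((insert muhat B).inf' (insert_nonempty muhat B) (dist y) -
        (insert muhat A).inf' (insert_nonempty muhat A) (dist y)) := by
  rw [sum_sub_distrib]
  unfold theta omegaCost
  ring

/-- **Submodularity (diminishing returns) of the modified clustering objective Θ.**
For all finite sets `S ⊆ T` and every point `x ∉ T`,
`Θ(T ∪ {x}, Y) - Θ(T, Y) ≤ Θ(S ∪ {x}, Y) - Θ(S, Y)`. -/
theorem theta_submodular {α : Type*} [MetricSpace α] [DecidableEq α]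
    (Y : Finset α) (muhat : α) :
    ∀ S T : Finset α, S ⊆ T → ∀ x : α, x ∉ T →
      theta muhat Y (insert x T) - theta muhat Y T ≤
        theta muhat Y (insert x S) - theta muhat Y S := by
  intro S T hST x _
  rw [theta_sub_theta, theta_sub_theta]
  refine sum_le_sum fun y _ => ?_
  simp only [insert_comm muhat x]
  exact inf'_sub_inf'_insert_le_of_subset (insert_nonempty muhat S)
    (insert_subset_insert muhat hST) (dist y) x
end

section
/- Let P be a finite set of at least two points in a metric space and let c ∈ P. Define σ = min_{x'∈P} Σ_{x∈P} d(x, x') and δ = min_{y∈P, y≠c} d(y, c). If m is a natural number with m·δ ≥ Σ_{x∈P} d(x, c) − σ, then for every y ∈ P, Σ_{x∈P} d(x, c) ≤ Σ_{x∈P} d(x, y) + m·d(c, y); that is, c is an optimal 1-median medoid of the multiset obtained from P by adding m extra copies of c. -/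
open Finset

/-- **Per-cluster copy-forcing estimate (non-strict).**
Let `P` be a finite set of at least two points of a metric space, `c ∈ P`,
`σ = min_{x' ∈ P} Σ_{x ∈ P} d(x, x')` and `δ = min_{y ∈ P, y ≠ c} d(y, c)`.
If `m·δ ≥ Σ_{x ∈ P} d(x, c) - σ`, then for every `y ∈ P`,
`Σ_{x ∈ P} d(x, c) ≤ Σ_{x ∈ P} d(x, y) + m·d(c, y)`: `c` is an optimal 1-median medoid
of the multiset obtained from `P` by adding `m` extra copies of `c`. -/
theorem copy_forcing_medoid {α : Type*} [MetricSpace α] [DecidableEq α]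
    (P : Finset α) (hP : 2 ≤ P.card) (c : α) (hc : c ∈ P)
    (σ δ : ℝ)
    (hσ : σ = P.inf' (Finset.card_pos.mp (by omega)) (fun x' => ∑ x ∈ P, dist x x'))
    (hδ : δ = (P.erase c).inf'
      (Finset.card_pos.mp (by rw [Finset.card_erase_of_mem hc]; omega))
      (fun y => dist y c))
    (m : ℕ) (hm : (∑ x ∈ P, dist x c) - σ ≤ (m : ℝ) * δ) :
    ∀ y ∈ P, (∑ x ∈ P, dist x c) ≤ (∑ x ∈ P, dist x y) + (m : ℝ) * dist c y := by
  intro y hy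
  obtain rfl | hyc := eq_or_ne y c
  · simp
  have hσy : σ ≤ ∑ x ∈ P, dist x y := hσ ▸ P.inf'_le _ hy
  have hδy : δ ≤ dist c y := by
    rw [hδ, dist_comm]
    exact (P.erase c).inf'_le _ (mem_erase.2 ⟨hyc, hy⟩)
  have hmδ : (m : ℝ) * δ ≤ m * dist c y := mul_le_mul_of_nonneg_left hδy m.cast_nonneg
  linarith
end

section
/- Let X be a finite set of points in a metric space partitioned into nonempty well-separated clusters P_1, …, P_k (each P_i having at least two points), i.e., for all i ≠ j, all x, y ∈ P_i and all z ∈ P_j, d(x, y) < d(x, z). For each i choose c_i ∈ P_i, set σ_i = min_{x'∈P_i} Σ_{x∈P_i} d(x, x') and δ_i = min_{y∈P_i, y≠c_i} d(y, c_i), and let m_i = ⌈(Σ_{x∈P_i} d(x, c_i) − σ_i)/δ_i⌉. Let X' be the multiset consisting of m_i copies of c_i for each i, so |X'| = Σ_{i∈[k]} m_i ≤ Σ_{i∈[k]} |P_i|·⌈(Σ_{x∈P_i} d(x, c_i) − σ_i)/δ_i⌉. Then for every choice of candidate medoids y_1 ∈ P_1, …, y_k ∈ P_k, the k-median cost of {c_1,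 …, c_k} on the multiset X + X' is at most the k-median cost of {y_1, …, y_k} on X + X', where the k-median cost of a center set S is Σ_{x∈X+X'} min_{m∈S} d(x, m) counted with multiplicity. -/
/-!
Well-separation makes every point of a cluster `P i` choose, among centers `w j ∈ P j`, its
own cluster's center `w i`. So for such a center set the cost on `X + X'` splits into
per-cluster costs `∑_{x ∈ P i} d(x, w i) + m i · d(c i, w i)`. For `w i = c i` this is
`∑_{x ∈ P i} d(x, c i)`; for `w i = y i ≠ c i` it is at least `σ i + m i · δ i`, and `m i` copies
of `c i` are exactly enough to pay for the excess `∑_{x ∈ P i} d(x, c i) - σ i`.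
-/

open Finset

/-- The k-median cost of the (indexed) center set `{c 0, …, c (k-1)}` on a multiset `Q`,
counted with multiplicity: `Σ_{x ∈ Q} min_{j ∈ [k]} d(x, c j)`. -/
noncomputable def kmedCost {α : Type*} [MetricSpace α] {k : ℕ} (hk : 0 < k)
    (Q : Multiset α) (c : Fin k → α) : ℝ :=
  (Q.map fun x =>
    (Finset.univ : Finset (Fin k)).inf' ⟨⟨0, hk⟩, Finset.mem_univ _⟩
      fun j => dist x (c j)).sum

noncomputable def nearestDist {α : Type*} [MetricSpace α] {k : ℕ} (hk : 0 < k)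
    (w : Fin k → α) (x : α) : ℝ :=
  (univ : Finset (Fin k)).inf' ⟨⟨0, hk⟩, mem_univ _⟩ fun j => dist x (w j)

section KMedCost

variable {α : Type*} [MetricSpace α] {k : ℕ} (hk : 0 < k) (w : Fin k → α)

theorem kmedCost_eq_sum_map_nearestDist (Q : Multiset α) :
    kmedCost hk Q w = (Q.map (nearestDist hk w)).sum :=
  rfl

@[simp]
theorem kmedCost_zero : kmedCost hk 0 w = 0 := by
  simp [kmedCost_eq_sum_map_nearestDist]

theorem kmedCost_add (Q₁ Q₂ : Multiset α) :
    kmedCost hk (Q₁ + Q₂) w = kmedCost hk Q₁ w + kmedCost hk Q₂ w := by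
  simp only [kmedCost_eq_sum_map_nearestDist, Multiset.map_add, Multiset.sum_add]

theorem kmedCost_replicate (n : ℕ) (a : α) :
    kmedCost hk (Multiset.replicate n a) w = n * nearestDist hk w a := by
  simp [kmedCost_eq_sum_map_nearestDist, Multiset.map_replicate]

theorem kmedCost_sum {ι : Type*} (s : Finset ι) (Q : ι → Multiset α) :
    kmedCost hk (∑ i ∈ s, Q i) w = ∑ i ∈ s, kmedCost hk (Q i) w := by
  classical
  induction s using Finset.induction_on with
  | empty => simp
  | insert i s hi ih => rw [sum_insert hi, sum_insert hi, kmedCost_add, ih]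

theorem kmedCost_biUnion [DecidableEq α] {ι : Type*} (s : Finset ι) (P : ι → Finset α)
    (hdisj : (s : Set ι).PairwiseDisjoint P) :
    kmedCost hk (s.biUnion P).val w = ∑ i ∈ s, ∑ x ∈ P i, nearestDist hk w x := by
  rw [kmedCost_eq_sum_map_nearestDist, ← sum_eq_multiset_sum, sum_biUnion hdisj]

end KMedCost

section WellSeparated

variable {α : Type*} [MetricSpace α] {k : ℕ} (hk : 0 < k) {P : Fin k → Finset α}
  (hsep : ∀ i j, i ≠ j → ∀ x ∈ P i, ∀ y ∈ P i, ∀ z ∈ P j, dist x y < dist x z)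
  {w : Fin k → α} (hw : ∀ i, w i ∈ P i)
include hsep hw

theorem nearestDist_eq_of_wellSeparated {i : Fin k} {x : α} (hx : x ∈ P i) :
    nearestDist hk w x = dist x (w i) := by
  refine le_antisymm (inf'_le _ (mem_univ i)) (le_inf' _ _ fun j _ => ?_)
  rcases eq_or_ne j i with rfl | hji
  · exact le_rfl
  · exact (hsep i j hji.symm x hx (w i) (hw i) (w j) (hw j)).le

theorem kmedCost_add_replicate_of_wellSeparated [DecidableEq α]
    (hdisj : ∀ i j, i ≠ j → Disjoint (P i) (P j)) {c : Fin k → α} (hc : ∀ i, c i ∈ P i)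
    (m : Fin k → ℕ) :
    kmedCost hk ((univ.biUnion P).val + ∑ i, Multiset.replicate (m i) (c i)) w =
      ∑ i, (∑ x ∈ P i, dist x (w i) + m i * dist (c i) (w i)) := by
  rw [kmedCost_add, kmedCost_biUnion _ _ _ _ fun i _ j _ hij => hdisj i j hij,
    kmedCost_sum, ← sum_add_distrib]
  refine sum_congr rfl fun i _ => ?_
  rw [kmedCost_replicate, nearestDist_eq_of_wellSeparated hk hsep hw (hc i)]
  congr 1
  exact sum_congr rfl fun x hx => nearestDist_eq_of_wellSeparated hk hsep hw hx

end WellSeparated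

theorem le_add_natCeil_div_mul {a b σ δ d : ℝ} (hδ : 0 < δ) (hσ : σ ≤ b) (hd : δ ≤ d) :
    a ≤ b + ⌈(a - σ) / δ⌉₊ * d := by
  have hceil : a - σ ≤ ⌈(a - σ) / δ⌉₊ * δ := (div_le_iff₀ hδ).mp (Nat.le_ceil _)
  have hmono : (⌈(a - σ) / δ⌉₊ : ℝ) * δ ≤ ⌈(a - σ) / δ⌉₊ * d :=
    mul_le_mul_of_nonneg_left hd (Nat.cast_nonneg _)
  linarith

/-- **Theorem 2 of the paper.**  Let `X` be a finite set partitioned into nonempty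
well-separated clusters `P 1, …, P k` (each of size at least two), let `c i ∈ P i` be
adversarial centers, `σ i = min_{x' ∈ P i} Σ_{x ∈ P i} d(x, x')`,
`δ i = min_{y ∈ P i, y ≠ c i} d(y, c i)`, and
`m i = ⌈(Σ_{x ∈ P i} d(x, c i) - σ i) / δ i⌉`.  Let `X'` consist of `m i` copies of
`c i` for each `i`, so `|X'| = Σ_i m i ≤ Σ_i |P i|·⌈(Σ_{x ∈ P i} d(x, c i) - σ i)/δ i⌉.`
Then for every choice of candidate medoids `y i ∈ P i`, the k-median cost of
`{c 1, …, c k}` on `X + X'` is at most that of `{y 1, …, y k}`. -/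
theorem wellSeparated_adversarial_cost_bound
    {α : Type*} [MetricSpace α] [DecidableEq α]
    {k : ℕ} (hk : 0 < k)
    (X : Finset α) (P : Fin k → Finset α)
    (hPcard : ∀ i, 2 ≤ (P i).card)
    (hdisj : ∀ i j, i ≠ j → Disjoint (P i) (P j))
    (hpart : X = Finset.univ.biUnion P)
    (hsep : ∀ i j, i ≠ j → ∀ x ∈ P i, ∀ y ∈ P i, ∀ z ∈ P j, dist x y < dist x z)
    (c : Fin k → α) (hc : ∀ i, c i ∈ P i)
    (σ δ : Fin k → ℝ)
    (hσ : ∀ i, σ i = (P i).inf' (Finset.card_pos.mp (by have := hPcard i; omega))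
      (fun x' => ∑ x ∈ P i, dist x x'))
    (hδ : ∀ i, δ i = ((P i).erase (c i)).inf'
      (Finset.card_pos.mp
        (by rw [Finset.card_erase_of_mem (hc i)]; have := hPcard i; omega))
      (fun y => dist y (c i)))
    (m : Fin k → ℕ)
    (hm : ∀ i, m i = ⌈((∑ x ∈ P i, dist x (c i)) - σ i) / δ i⌉₊)
    (X' : Multiset α)
    (hX' : X' = ∑ i : Fin k, Multiset.replicate (m i) (c i)) :
    Multiset.card X' = ∑ i, m i ∧
    (∑ i, m i) ≤
      ∑ i, (P i).card * ⌈((∑ x ∈ P i, dist x (c i)) - σ i) / δ i⌉₊ ∧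
    ∀ y : Fin k → α, (∀ i, y i ∈ P i) →
      kmedCost hk (X.val + X') c ≤ kmedCost hk (X.val + X') y := by
  subst hpart hX'
  refine ⟨by simp [Multiset.card_sum], sum_le_sum fun i _ => ?_, fun y hy => ?_⟩
  · rw [hm i]
    exact Nat.le_mul_of_pos_left _ (by have := hPcard i; omega)
  rw [kmedCost_add_replicate_of_wellSeparated hk hsep hc hdisj hc,
    kmedCost_add_replicate_of_wellSeparated hk hsep hy hdisj hc]
  refine sum_le_sum fun i _ => ?_
  rcases eq_or_ne (y i) (c i) with hyc | hyc
  · simp [hyc]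
  have hδpos : 0 < δ i := by
    rw [hδ i, lt_inf'_iff]
    exact fun z hz => dist_pos.mpr (ne_of_mem_erase hz)
  have hσle : σ i ≤ ∑ x ∈ P i, dist x (y i) := hσ i ▸ inf'_le _ (hy i)
  have hδle : δ i ≤ dist (c i) (y i) := by
    rw [hδ i, dist_comm]
    exact inf'_le _ (mem_erase.mpr ⟨hyc, hy i⟩)
  simpa [hm i] using le_add_natCeil_div_mul hδpos hσle hδle
end

section
/- Let X be a finite set of at least k ≥ 1 points in a metric space with |X| ≥ 2, and let c_1, …, c_k be k distinct points of X. Then there exists N ∈ ℕ such that for all m ≥ N, the set {c_1, …, c_k} is the unique minimizer of the k-median cost Σ_{x∈Q} min_{j∈[k]} d(x, s_j) (counted with multiplicity) over all k-element subsets {s_1, …, s_k} of X, where Q is the multiset obtained from X by adding m extra copies of each c_i. -/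
open Finset

/-- The k-median cost of a nonempty finite center set `S` on a multiset `Q`, counted
with multiplicity: `Σ_{x ∈ Q} min_{m ∈ S} d(x, m)`. -/
noncomputable def kmedCostS {α : Type*} [MetricSpace α]
    (Q : Multiset α) (S : Finset α) (hS : S.Nonempty) : ℝ :=
  (Q.map fun x => S.inf' hS fun m => dist x m).sum

/-! The extra copies sit on the centers `c i`, so the cost of `C = {c i}` does not depend on `m`.
Any other `k`-subset `S ⊆ X` misses some `c i`, and each of the `m` copies of that point then pays
at least the minimal separation `δ > 0` of the finite set `X ∪ C`; once `m δ` exceeds the cost of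
`C` on `X`, the set `C` is strictly better. -/

lemma Finset.exists_mem_notMem_of_card_le_of_ne {α : Type*} {s t : Finset α} (hcard : #t ≤ #s)
    (hne : t ≠ s) : ∃ x ∈ s, x ∉ t := by
  by_contra! h
  exact hne (eq_of_subset_of_card_le h hcard).symm

section Separation

variable {α : Type*} [MetricSpace α]

lemma Finset.inf'_dist_eq_zero_of_mem {T : Finset α} (hT : T.Nonempty) {x : α} (hx : x ∈ T) :
    T.inf' hT (dist x ·) = 0 :=
  le_antisymm ((inf'_le _ hx).trans_eq (dist_self x)) (le_inf' hT _ fun _ _ => dist_nonneg)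

lemma Finset.infsep_le_inf'_dist {T U : Finset α} (hT : T.Nonempty) (hTU : T ⊆ U) {x : α}
    (hxU : x ∈ U) (hxT : x ∉ T) : (U : Set α).infsep ≤ T.inf' hT (dist x ·) :=
  le_inf' hT _ fun _ hy => Set.infsep_le_dist_of_mem (mem_coe.2 hxU) (mem_coe.2 (hTU hy))
    (ne_of_mem_of_not_mem hy hxT).symm

end Separation

section Cost

variable {α : Type*} [MetricSpace α] {T : Finset α} (hT : T.Nonempty)

lemma kmedCostS_nonneg (Q : Multiset α) : 0 ≤ kmedCostS Q T hT :=
  Multiset.sum_nonneg fun _ hr => by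
    obtain ⟨x, -, rfl⟩ := Multiset.mem_map.1 hr
    exact le_inf' hT _ fun _ _ => dist_nonneg

lemma kmedCostS_add (P Q : Multiset α) :
    kmedCostS (P + Q) T hT = kmedCostS P T hT + kmedCostS Q T hT := by
  simp only [kmedCostS, Multiset.map_add, Multiset.sum_add]

lemma kmedCostS_sum {ι : Type*} (s : Finset ι) (Q : ι → Multiset α) :
    kmedCostS (∑ i ∈ s, Q i) T hT = ∑ i ∈ s, kmedCostS (Q i) T hT :=
  map_sum (Multiset.sumAddMonoidHom.comp (Multiset.mapAddMonoidHom _)) Q s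

lemma kmedCostS_replicate (m : ℕ) (x : α) :
    kmedCostS (Multiset.replicate m x) T hT = m * T.inf' hT (dist x ·) := by
  simp only [kmedCostS, Multiset.map_replicate, Multiset.sum_replicate, nsmul_eq_mul]

lemma kmedCostS_add_sum_replicate {ι : Type*} [Fintype ι] (P : Multiset α) (m : ℕ)
    (c : ι → α) :
    kmedCostS (P + ∑ i, Multiset.replicate m (c i)) T hT
      = kmedCostS P T hT + m * ∑ i, T.inf' hT (dist (c i) ·) := by
  simp only [kmedCostS_add, kmedCostS_sum, kmedCostS_replicate, mul_sum]

end Cost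

theorem point_mass_forces_medoids_general
    {α : Type*} [MetricSpace α] [DecidableEq α]
    {k : ℕ} (hk : 1 ≤ k)
    (X : Finset α)
    (c : Fin k → α) (hcinj : Function.Injective c) :
    ∃ N : ℕ, ∀ m : ℕ, N ≤ m →
      ∀ S : Finset α, S ⊆ X → ∀ hS : S.Nonempty, S.card = k →
        S ≠ Finset.image c Finset.univ →
        kmedCostS (X.val + ∑ i : Fin k, Multiset.replicate m (c i))
            (Finset.image c Finset.univ)
            ⟨c ⟨0, hk⟩, Finset.mem_image_of_mem c (Finset.mem_univ _)⟩ <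
          kmedCostS (X.val + ∑ i : Fin k, Multiset.replicate m (c i)) S hS := by
  have hC : (image c univ).Nonempty := ⟨c ⟨0, hk⟩, mem_image_of_mem c (mem_univ _)⟩
  set δ := ((X ∪ image c univ : Finset α) : Set α).infsep
  refine ⟨⌈kmedCostS X.val (image c univ) hC / δ⌉₊ + 1, fun m hm S hSX hS hScard hSC => ?_⟩
  obtain ⟨_, hxC, hxS⟩ := exists_mem_notMem_of_card_le_of_ne
    (by rw [hScard, card_image_of_injective _ hcinj, card_fin]) hSC
  obtain ⟨i, -, rfl⟩ := mem_image.1 hxC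
  have hsep : δ ≤ S.inf' hS (dist (c i) ·) :=
    infsep_le_inf'_dist hS (hSX.trans subset_union_left) (mem_union_right _ hxC) hxS
  have hδ : 0 < δ := by
    obtain ⟨s, hs⟩ := hS
    refine (infsep_pos_iff_nontrivial _).2
      ⟨c i, mem_union_right _ hxC, s, subset_union_left (hSX hs), ?_⟩
    exact (ne_of_mem_of_not_mem hs hxS).symm
  refine (kmedCostS_add_sum_replicate hC _ _ _).trans_lt ?_
  rw [kmedCostS_add_sum_replicate,
    sum_eq_zero fun j _ => inf'_dist_eq_zero_of_mem hC (mem_image_of_mem c (mem_univ j)),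
    mul_zero, add_zero]
  calc kmedCostS X.val (image c univ) hC < m * δ :=
      (div_lt_iff₀ hδ).1 (Nat.lt_of_ceil_lt (Nat.lt_of_succ_le hm))
    _ ≤ m * ∑ j, S.inf' hS (dist (c j) ·) := by
      gcongr
      exact hsep.trans (single_le_sum (f := fun j => S.inf' hS (dist (c j) ·))
        (fun j _ => le_inf' hS _ fun _ _ => dist_nonneg) (mem_univ i))
    _ ≤ _ := le_add_of_nonneg_left (kmedCostS_nonneg hS _)

/-- **Convergence of Algorithm 1 (point-mass forcing).**
Let `X` be a finite set of at least `k ≥ 1` points of a metric space with `|X| ≥ 2`, and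
let `c 1, …, c k` be distinct points of `X`.  Then there is `N` such that for all
`m ≥ N`, the set `{c 1, …, c k}` is the unique minimizer of the k-median cost over all
`k`-element subsets of `X`, on the multiset obtained from `X` by adding `m` extra copies
of each `c i`. -/
theorem point_mass_forces_medoids
    {α : Type*} [MetricSpace α] [DecidableEq α]
    {k : ℕ} (hk : 1 ≤ k)
    (X : Finset α) (hX2 : 2 ≤ X.card) (hkX : k ≤ X.card)
    (c : Fin k → α) (hcinj : Function.Injective c) (hcX : ∀ i, c i ∈ X) :
    ∃ N : ℕ, ∀ m : ℕ, N ≤ m →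
      ∀ S : Finset α, S ⊆ X → ∀ hS : S.Nonempty, S.card = k →
        S ≠ Finset.image c Finset.univ →
        kmedCostS (X.val + ∑ i : Fin k, Multiset.replicate m (c i))
            (Finset.image c Finset.univ)
            ⟨c ⟨0, hk⟩, Finset.mem_image_of_mem c (Finset.mem_univ _)⟩ <
          kmedCostS (X.val + ∑ i : Fin k, Multiset.replicate m (c i)) S hS :=
  point_mass_forces_medoids_general hk X c hcinj
end
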